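/- Assume the Hasse bound: |a_p| ≤ 2√p for every prime p not dividing Δ. Then for every ε > 0 there exists a constant C > 0 such that for all real x ≥ 2 and all real y with 1 ≤ y ≤ 2√x, one has D(x, y) ≤ C · x^ε · ∑_{1 ≤ m ≤ 4x/y², m squarefree} S_m(x). -/

import Mathlib

/-!
Swapping the order of summation, `D(x, y) = ∑_{p ≤ x} #{n ∈ [y, 2√x] : n ∣ t_p}`. Each inner count
is at most the number of divisors of `t_p ≤ 4x`, hence `O_ε(x^ε)`. A prime for which some `n ≥ y`
divides `t_p` satisfies `n² r_p ≤ s_p² r_p = 4p - a_p² ≤ 4x`, so `r_p ≤ 4x/y²` is squarefree and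
`r_p (4p - a_p²) = (s_p r_p)²` is a square: `p` is counted by `S_{r_p}(x)`.
-/

open scoped BigOperators

/-- Trace of Frobenius `a_p` of the reduction of `W` mod `p`, as in the paper:
`a_p = p + 1 - #W_p(𝔽_p)` for `p ∤ Δ`, and `a_p = 1` for `p ∣ Δ`. -/
noncomputable def trFrob (W : WeierstrassCurve ℤ) (p : ℕ) : ℤ :=
  if (p : ℤ) ∣ W.Δ then 1
  else (p : ℤ) + 1 - Nat.card ((W.map (Int.castRingHom (ZMod p))).toAffine.Point)

/-- The prime counting function `π(x)`. -/
noncomputable def primePi (x : ℝ) : ℕ := {p : ℕ | p.Prime ∧ (p : ℝ) ≤ x}.ncard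

/-- The largest `s` with `s ^ 2 ∣ n` (for `n > 0` this gives the unique decomposition
`n = s ^ 2 * r` with `r` squarefree). -/
noncomputable def sqPart (n : ℕ) : ℕ := sSup {s : ℕ | s ^ 2 ∣ n}

/-- `s_p`, where `4p - a_p ^ 2 = s_p ^ 2 * r_p` with `r_p` squarefree. -/
noncomputable def sP (W : WeierstrassCurve ℤ) (p : ℕ) : ℕ :=
  sqPart (4 * p - trFrob W p ^ 2).toNat

/-- `r_p`, the squarefree part of `4p - a_p ^ 2`. -/
noncomputable def rP (W : WeierstrassCurve ℤ) (p : ℕ) : ℕ :=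
  (4 * p - trFrob W p ^ 2).toNat / sP W p ^ 2

/-- `t_p`, the square root of the order of the Tate–Shafarevich group `Ш_p`:
`t_p = s_p` if `4p - a_p ^ 2` is odd and `t_p = s_p / 2` otherwise. -/
noncomputable def tP (W : WeierstrassCurve ℤ) (p : ℕ) : ℕ :=
  if Odd (4 * p - trFrob W p ^ 2).toNat then sP W p else sP W p / 2

/-- `S_m(x)`: the number of primes `p ≤ x` such that `m * (4p - a_p ^ 2)` is a perfect square. -/
noncomputable def SCount (W : WeierstrassCurve ℤ) (m : ℕ) (x : ℝ) : ℕ :=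
  {p : ℕ | p.Prime ∧ (p : ℝ) ≤ x ∧ IsSquare ((m : ℤ) * (4 * p - trFrob W p ^ 2))}.ncard

/-- `π_n(x)`: the number of primes `p ≤ x` with `p ∤ Δ` and `n ∣ t_p`
(equivalently, `n ^ 2 ∣ #Ш_p`). -/
noncomputable def piN (W : WeierstrassCurve ℤ) (n : ℕ) (x : ℝ) : ℕ :=
  {p : ℕ | p.Prime ∧ (p : ℝ) ≤ x ∧ ¬ (p : ℤ) ∣ W.Δ ∧ n ∣ tP W p}.ncard

/-- `D(x, y) = ∑_{y ≤ n ≤ 2√x} π_n(x)`. -/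
noncomputable def DCount (W : WeierstrassCurve ℤ) (x y : ℝ) : ℕ :=
  ∑ n ∈ Finset.Icc ⌈y⌉₊ ⌊2 * Real.sqrt x⌋₊, piN W n x

/-- `π_TS(x)`: the number of primes `p ≤ x` with `p ∤ Δ` and trivial `Ш_p`, i.e. `t_p = 1`. -/
noncomputable def piTS (W : WeierstrassCurve ℤ) (x : ℝ) : ℕ :=
  {p : ℕ | p.Prime ∧ (p : ℝ) ≤ x ∧ ¬ (p : ℤ) ∣ W.Δ ∧ tP W p = 1}.ncard

/-- `Π_m(x)`: the number of primes `p ≤ x` with `p ∤ Δ` whose Frobenius field is `ℚ(√-m)`,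
i.e. with `r_p = m`. -/
noncomputable def PiFrob (W : WeierstrassCurve ℤ) (m : ℕ) (x : ℝ) : ℕ :=
  {p : ℕ | p.Prime ∧ (p : ℝ) ≤ x ∧ ¬ (p : ℤ) ∣ W.Δ ∧ rP W p = m}.ncard

/-- `σ(x; u, v) = ∑_{u - v ≤ m ≤ u, m squarefree} Π_m(x)`. -/
noncomputable def sigmaCount (W : WeierstrassCurve ℤ) (x u v : ℝ) : ℕ :=
  ∑ m ∈ (Finset.Icc ⌈u - v⌉₊ ⌊u⌋₊).filter Squarefree, PiFrob W m x

/-- Hypothesis (H): the Cojocaru–David character-sum bound, i.e. there is a constant `A` such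
that for all `x ≥ 2` and all distinct primes `ℓ₁, ℓ₂ > 3`,
`|∑_{p ≤ x} ((a_p² - 4p)/(ℓ₁ℓ₂)) - π(x)/((ℓ₁² - 1)(ℓ₂² - 1))| ≤ A (ℓ₁ℓ₂)³ x^(1/2) log(ℓ₁ℓ₂x)`. -/
def HypH (W : WeierstrassCurve ℤ) : Prop :=
  ∃ A : ℝ, ∀ x : ℝ, 2 ≤ x → ∀ l₁ l₂ : ℕ, l₁.Prime → l₂.Prime → l₁ ≠ l₂ → 3 < l₁ → 3 < l₂ →
    |(∑ p ∈ (Finset.range (⌊x⌋₊ + 1)).filter Nat.Prime,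
        (jacobiSym (trFrob W p ^ 2 - 4 * p) (l₁ * l₂) : ℝ)) -
      (primePi x : ℝ) / (((l₁ : ℝ) ^ 2 - 1) * ((l₂ : ℝ) ^ 2 - 1))| ≤
    A * ((l₁ : ℝ) * l₂) ^ 3 * x ^ ((1 : ℝ) / 2) * Real.log ((l₁ : ℝ) * l₂ * x)

/-- The Hasse bound: `|a_p| ≤ 2√p` for all primes `p ∤ Δ`. -/
def HasseBound (W : WeierstrassCurve ℤ) : Prop :=
  ∀ p : ℕ, p.Prime → ¬ (p : ℤ) ∣ W.Δ → |(trFrob W p : ℝ)| ≤ 2 * Real.sqrt p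

open Finset

lemma add_one_le_mul_one_add_pow {a : ℝ} (ha : 0 < a) (e : ℕ) :
    (e : ℝ) + 1 ≤ (1 + a⁻¹) * (1 + a) ^ e :=
  calc (e : ℝ) + 1 ≤ (1 + a⁻¹) * (1 + e * a) := by
        field_simp
        nlinarith [mul_pos ha ha]
    _ ≤ (1 + a⁻¹) * (1 + a) ^ e :=
        mul_le_mul_of_nonneg_left (one_add_mul_le_pow (by linarith) e) (by positivity)

lemma add_one_le_pow_of_two_le {b : ℝ} (hb : 2 ≤ b) (e : ℕ) : (e : ℝ) + 1 ≤ b ^ e :=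
  calc (e : ℝ) + 1 ≤ 2 ^ e := by exact_mod_cast Nat.lt_two_pow_self
    _ ≤ b ^ e := pow_le_pow_left₀ zero_le_two hb e

-- The factor `(e + 1) / p ^ (ε e)` of `d(n) / n ^ ε` is at most `1` once `p ^ ε ≥ 2`, and
-- bounded by a constant depending only on `ε` otherwise.
lemma add_one_le_mul_rpow_pow {ε : ℝ} (hε : 0 < ε) {p : ℕ} (hp : 2 ≤ p) (e : ℕ) :
    (e : ℝ) + 1 ≤ (if p < ⌈(2 : ℝ) ^ ε⁻¹⌉₊ then 1 + ((2 : ℝ) ^ ε - 1)⁻¹ else 1) *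
      ((p : ℝ) ^ ε) ^ e := by
  split_ifs with hpK
  · have h2ε : 0 < (2 : ℝ) ^ ε - 1 := sub_pos.mpr (Real.one_lt_rpow one_lt_two hε)
    calc (e : ℝ) + 1 ≤ (1 + ((2 : ℝ) ^ ε - 1)⁻¹) * (1 + ((2 : ℝ) ^ ε - 1)) ^ e :=
          add_one_le_mul_one_add_pow h2ε e
      _ ≤ _ := by
          rw [add_sub_cancel]
          gcongr
          exact_mod_cast hp
  · have hpε : 2 ≤ (p : ℝ) ^ ε :=
      calc (2 : ℝ) = ((2 : ℝ) ^ ε⁻¹) ^ ε := by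
            rw [← Real.rpow_mul zero_le_two, inv_mul_cancel₀ hε.ne', Real.rpow_one]
        _ ≤ (p : ℝ) ^ ε := by
          gcongr
          exact (Nat.le_ceil _).trans (by exact_mod_cast not_lt.mp hpK)
    rw [one_mul]
    exact add_one_le_pow_of_two_le hpε e

theorem exists_card_divisors_le_mul_rpow {ε : ℝ} (hε : 0 < ε) :
    ∃ C : ℝ, 0 < C ∧ ∀ n : ℕ, n ≠ 0 → (#n.divisors : ℝ) ≤ C * (n : ℝ) ^ ε := by
  set K := ⌈(2 : ℝ) ^ ε⁻¹⌉₊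
  set M : ℝ := 1 + ((2 : ℝ) ^ ε - 1)⁻¹
  have hM : 1 ≤ M :=
    le_add_of_nonneg_right (inv_nonneg.mpr (sub_nonneg.mpr (Real.one_le_rpow one_le_two hε.le)))
  refine ⟨M ^ K, by positivity, fun n hn => ?_⟩
  have hsmall : ∏ p ∈ n.primeFactors, (if p < K then M else 1) ≤ M ^ K := by
    rw [← prod_filter, prod_const]
    refine pow_le_pow_right₀ hM ((card_le_card fun p hp => ?_).trans (card_range K).le)
    exact mem_range.mpr (mem_filter.mp hp).2
  have hnε : (n : ℝ) ^ ε = ∏ p ∈ n.primeFactors, ((p : ℝ) ^ ε) ^ n.factorization p := by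
    conv_lhs => rw [Nat.prod_primeFactors_pow_factorization hn]
    push_cast
    rw [← Real.finsetProd_rpow _ _ fun p _ => by positivity]
    exact prod_congr rfl fun p _ => (Real.rpow_pow_comm (Nat.cast_nonneg p) _ _).symm
  calc (#n.divisors : ℝ) = ∏ p ∈ n.primeFactors, ((n.factorization p : ℝ) + 1) := by
        rw [Nat.card_divisors hn]; push_cast; rfl
    _ ≤ ∏ p ∈ n.primeFactors, ((if p < K then M else 1) * ((p : ℝ) ^ ε) ^ n.factorization p) :=
        prod_le_prod (fun _ _ => by positivity) fun p hp =>
          add_one_le_mul_rpow_pow hε (Nat.prime_of_mem_primeFactors hp).two_le _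
    _ ≤ M ^ K * (n : ℝ) ^ ε := by
        rw [prod_mul_distrib, hnε]
        gcongr

lemma bddAbove_sq_dvd {n : ℕ} (hn : n ≠ 0) : BddAbove {s : ℕ | s ^ 2 ∣ n} :=
  ⟨n, fun s hs => (Nat.le_self_pow two_ne_zero s).trans (Nat.le_of_dvd hn.bot_lt hs)⟩

lemma sqPart_sq_dvd {n : ℕ} (hn : n ≠ 0) : sqPart n ^ 2 ∣ n :=
  Nat.sSup_mem ⟨1, by simp⟩ (bddAbove_sq_dvd hn)

lemma le_sqPart {n s : ℕ} (hn : n ≠ 0) (h : s ^ 2 ∣ n) : s ≤ sqPart n :=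
  le_csSup (bddAbove_sq_dvd hn) h

lemma sqPart_pos {n : ℕ} (hn : n ≠ 0) : 0 < sqPart n :=
  le_sqPart hn (by simp)

lemma sqPart_sq_mul_div {n : ℕ} (hn : n ≠ 0) : sqPart n ^ 2 * (n / sqPart n ^ 2) = n :=
  Nat.mul_div_cancel' (sqPart_sq_dvd hn)

lemma squarefree_div_sqPart_sq {n : ℕ} (hn : n ≠ 0) : Squarefree (n / sqPart n ^ 2) := by
  intro k hk
  have hdvd : (sqPart n * k) ^ 2 ∣ n := by
    rw [mul_pow]
    nth_rw 2 [← sqPart_sq_mul_div hn]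
    exact mul_dvd_mul_left _ (by rwa [pow_two])
  have hk0 : 0 < k := Nat.pos_of_ne_zero (by rintro rfl; simp_all)
  have : sqPart n * k ≤ sqPart n * 1 := by simpa using le_sqPart hn hdvd
  exact Nat.isUnit_iff.mpr (le_antisymm (Nat.le_of_mul_le_mul_left this (sqPart_pos hn)) hk0)

lemma two_dvd_sqPart {n : ℕ} (hn : n ≠ 0) (h4 : 4 ∣ n) : 2 ∣ sqPart n := by
  by_contra hodd
  have hcop : Nat.Coprime 4 (sqPart n ^ 2) := by
    simpa using (Nat.coprime_two_left.mpr (Nat.odd_iff.mpr (by omega))).pow 2 2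
  rw [← sqPart_sq_mul_div hn] at h4
  have h22 : 2 * 2 ∣ n / sqPart n ^ 2 := hcop.dvd_of_dvd_mul_left h4
  exact absurd (Nat.isUnit_iff.mp (squarefree_div_sqPart_sq hn 2 h22)) (by norm_num)

-- `toNat` truncates, so `frobDisc W p ≠ 0` says exactly that `4p - a_p² > 0`.
noncomputable def frobDisc (W : WeierstrassCurve ℤ) (p : ℕ) : ℕ :=
  (4 * p - trFrob W p ^ 2).toNat

section FrobDisc

variable {W : WeierstrassCurve ℤ} {p : ℕ}

lemma frobDisc_le : frobDisc W p ≤ 4 * p := by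
  have : 4 * (p : ℤ) - trFrob W p ^ 2 ≤ 4 * p := by nlinarith [sq_nonneg (trFrob W p)]
  unfold frobDisc
  omega

lemma trFrob_sq_lt (hHasse : HasseBound W) (hp : p.Prime) (hd : ¬ (p : ℤ) ∣ W.Δ) :
    trFrob W p ^ 2 < 4 * p := by
  have hle : trFrob W p ^ 2 ≤ 4 * (p : ℤ) := by
    have h := pow_le_pow_left₀ (abs_nonneg _) (hHasse p hp hd) 2
    rw [sq_abs, mul_pow, Real.sq_sqrt (Nat.cast_nonneg p)] at h
    exact_mod_cast (by linarith : (trFrob W p : ℝ) ^ 2 ≤ 4 * p)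
  refine hle.lt_of_ne fun hsq => (Nat.prime_iff_prime_int.mp hp).not_isSquare ?_
  obtain ⟨b, hb⟩ : Even (trFrob W p) := by
    rw [← Int.even_pow' two_ne_zero, hsq]
    exact ⟨2 * p, by ring⟩
  exact ⟨b, by rw [hb] at hsq; linarith⟩

lemma frobDisc_ne_zero (hHasse : HasseBound W) (hp : p.Prime) (hd : ¬ (p : ℤ) ∣ W.Δ) :
    frobDisc W p ≠ 0 := by
  have := trFrob_sq_lt hHasse hp hd
  unfold frobDisc
  omega

lemma natCast_frobDisc (h : frobDisc W p ≠ 0) :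
    (frobDisc W p : ℤ) = 4 * p - trFrob W p ^ 2 := by
  unfold frobDisc at *
  omega

lemma sP_sq_mul_rP (h : frobDisc W p ≠ 0) : sP W p ^ 2 * rP W p = frobDisc W p :=
  sqPart_sq_mul_div h

lemma squarefree_rP (h : frobDisc W p ≠ 0) : Squarefree (rP W p) :=
  squarefree_div_sqPart_sq h

lemma isSquare_rP_mul (h : frobDisc W p ≠ 0) :
    IsSquare ((rP W p : ℤ) * (4 * p - trFrob W p ^ 2)) :=
  ⟨sP W p * rP W p, by rw [← natCast_frobDisc h, ← sP_sq_mul_rP h]; push_cast; ring⟩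

-- `4p - a_p²` is even only when `a_p` is, and then it is divisible by `4`.
lemma two_dvd_sP_of_even (h : frobDisc W p ≠ 0) (heven : Even (frobDisc W p)) : 2 ∣ sP W p := by
  refine two_dvd_sqPart h ?_
  have heven' : Even (4 * (p : ℤ) - trFrob W p ^ 2) := by
    rw [← natCast_frobDisc h]; exact_mod_cast heven
  obtain ⟨b, hb⟩ : Even (trFrob W p) := by
    rw [← Int.even_pow' two_ne_zero]
    simpa [Int.even_sub, Int.even_mul, (by decide : Even (4 : ℤ))] using heven'
  have : (4 : ℤ) ∣ frobDisc W p := ⟨p - b ^ 2, by rw [natCast_frobDisc h, hb]; ring⟩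
  exact_mod_cast this

lemma tP_dvd_sP (h : frobDisc W p ≠ 0) : tP W p ∣ sP W p := by
  unfold tP
  split_ifs with hodd
  · exact dvd_rfl
  · exact Nat.div_dvd_of_dvd (two_dvd_sP_of_even h (Nat.not_odd_iff_even.mp hodd))

lemma tP_ne_zero (h : frobDisc W p ≠ 0) : tP W p ≠ 0 := by
  have hs : 0 < sP W p := sqPart_pos h
  unfold tP
  split_ifs with hodd
  · exact hs.ne'
  · have := two_dvd_sP_of_even h (Nat.not_odd_iff_even.mp hodd)
    omega

lemma sq_mul_rP_le_of_dvd_tP (h : frobDisc W p ≠ 0) {n : ℕ} (hn : n ∣ tP W p) :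
    n ^ 2 * rP W p ≤ 4 * p :=
  calc n ^ 2 * rP W p ≤ sP W p ^ 2 * rP W p := by
        gcongr
        exact Nat.le_of_dvd (Nat.pos_of_ne_zero (sqPart_pos h).ne') (hn.trans (tP_dvd_sP h))
    _ ≤ 4 * p := (sP_sq_mul_rP h).trans_le frobDisc_le

lemma tP_le (h : frobDisc W p ≠ 0) : tP W p ≤ 4 * p :=
  calc tP W p ≤ tP W p ^ 2 := Nat.le_self_pow two_ne_zero _
    _ ≤ tP W p ^ 2 * rP W p := Nat.le_mul_of_pos_right _ (squarefree_rP h).ne_zero.bot_lt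
    _ ≤ 4 * p := sq_mul_rP_le_of_dvd_tP h dvd_rfl

end FrobDisc

lemma sum_card_filter_le_mul_sum_of_fiberwise {ι α β : Type*} [DecidableEq β] {I : Finset ι}
    {P : Finset α} {Q : ι → α → Prop} [∀ n p, Decidable (Q n p)] {f : α → β} {M : Finset β}
    {S : β → ℕ} {B : ℝ} (hB₀ : 0 ≤ B)
    (hB : ∀ p ∈ P, ∀ n ∈ I, Q n p → (#{n ∈ I | Q n p} : ℝ) ≤ B)
    (hf : ∀ p ∈ P, ∀ n ∈ I, Q n p → f p ∈ M)
    (hS : ∀ m ∈ M, #{p ∈ P | (∃ n ∈ I, Q n p) ∧ f p = m} ≤ S m) :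
    ((∑ n ∈ I, #{p ∈ P | Q n p} : ℕ) : ℝ) ≤ B * ((∑ m ∈ M, S m : ℕ) : ℝ) := by
  set P' := {p ∈ P | ∃ n ∈ I, Q n p}
  have hswap : ∑ n ∈ I, #{p ∈ P | Q n p} = ∑ p ∈ P', #{n ∈ I | Q n p} := by
    refine (sum_card_bipartiteAbove_eq_sum_card_bipartiteBelow Q).trans (sum_filter_of_ne ?_).symm
    intro p _ hp
    obtain ⟨n, hn⟩ := card_ne_zero.mp hp
    exact ⟨n, (mem_filter.mp hn).1, (mem_filter.mp hn).2⟩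
  have hfiber : #P' ≤ ∑ m ∈ M, S m := by
    have hmaps : ∀ p ∈ P', f p ∈ M := fun p hp => by
      obtain ⟨hpP, n, hn, hQ⟩ := mem_filter.mp hp
      exact hf p hpP n hn hQ
    rw [card_eq_sum_card_fiberwise hmaps]
    exact sum_le_sum fun m hm => by rw [filter_filter]; exact hS m hm
  calc ((∑ n ∈ I, #{p ∈ P | Q n p} : ℕ) : ℝ) = ∑ p ∈ P', (#{n ∈ I | Q n p} : ℝ) := by
        rw [hswap, Nat.cast_sum]
    _ ≤ ∑ _p ∈ P', B := sum_le_sum fun p hp => by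
        obtain ⟨hpP, n, hn, hQ⟩ := mem_filter.mp hp
        exact hB p hpP n hn hQ
    _ = #P' * B := by rw [sum_const, nsmul_eq_mul]
    _ ≤ B * ((∑ m ∈ M, S m : ℕ) : ℝ) := by
        rw [mul_comm]
        gcongr

lemma cast_le_of_mem_primesLE_floor {x : ℝ} {p : ℕ} (hp : p ∈ Nat.primesLE ⌊x⌋₊) :
    (p : ℝ) ≤ x :=
  (Nat.le_floor_iff' (Nat.prime_of_mem_primesLE hp).ne_zero).mp (Nat.le_of_mem_primesLE hp)

lemma ncard_setOf_prime_le (x : ℝ) (R : ℕ → Prop) [DecidablePred R] :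
    {p : ℕ | p.Prime ∧ (p : ℝ) ≤ x ∧ R p}.ncard = #{p ∈ Nat.primesLE ⌊x⌋₊ | R p} := by
  rw [← Set.ncard_coe_finset]
  congr 1
  ext p
  simp only [coe_filter, Nat.mem_primesLE]
  constructor
  · rintro ⟨hp, hpx, hR⟩
    exact ⟨⟨(Nat.le_floor_iff' hp.ne_zero).mpr hpx, hp⟩, hR⟩
  · rintro ⟨⟨hpx, hp⟩, hR⟩
    exact ⟨hp, (Nat.le_floor_iff' hp.ne_zero).mp hpx, hR⟩

lemma rP_le_floor_of_dvd_tP {W : WeierstrassCurve ℤ} {p n : ℕ} (h : frobDisc W p ≠ 0)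
    (hn : n ∣ tP W p) {x y : ℝ} (hy : 0 < y) (hyn : y ≤ n) (hpx : (p : ℝ) ≤ x) :
    rP W p ≤ ⌊4 * x / y ^ 2⌋₊ := by
  refine Nat.le_floor ((le_div_iff₀ (by positivity)).mpr ?_)
  have hle : ((n ^ 2 * rP W p : ℕ) : ℝ) ≤ ((4 * p : ℕ) : ℝ) :=
    Nat.cast_le.mpr (sq_mul_rP_le_of_dvd_tP h hn)
  push_cast at hle
  calc (rP W p : ℝ) * y ^ 2 ≤ n ^ 2 * rP W p := by rw [mul_comm]; gcongr
    _ ≤ 4 * x := by linarith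

theorem DCount_le_sum_SCount_general (W : WeierstrassCurve ℤ) (hHasse : HasseBound W) :
    ∀ ε : ℝ, 0 < ε → ∃ C : ℝ, 0 < C ∧ ∀ x y : ℝ, 2 ≤ x → 1 ≤ y → y ≤ 2 * Real.sqrt x →
      ((DCount W x y : ℕ) : ℝ) ≤
        C * x ^ ε *
          ((∑ m ∈ (Finset.Icc 1 ⌊4 * x / y ^ 2⌋₊).filter Squarefree, SCount W m x : ℕ) : ℝ) := by
  classical
  intro ε hε
  obtain ⟨C, hC, hdiv⟩ := exists_card_divisors_le_mul_rpow hε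
  refine ⟨C * 4 ^ ε, by positivity, fun x y hx hy _ => ?_⟩
  simp only [DCount, piN, SCount, ncard_setOf_prime_le]
  refine sum_card_filter_le_mul_sum_of_fiberwise (f := rP W) (by positivity) ?_ ?_ ?_
  · rintro p hp n - ⟨hd, -⟩
    have h := frobDisc_ne_zero hHasse (Nat.prime_of_mem_primesLE hp) hd
    calc (#{n ∈ _ | _} : ℝ) ≤ #(tP W p).divisors := Nat.cast_le.mpr <| card_le_card fun n hn =>
          Nat.mem_divisors.mpr ⟨(mem_filter.mp hn).2.2, tP_ne_zero h⟩
      _ ≤ C * (tP W p : ℝ) ^ ε := hdiv _ (tP_ne_zero h)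
      _ ≤ C * (4 * x) ^ ε := by
          gcongr
          have hpx := cast_le_of_mem_primesLE_floor hp
          exact (Nat.cast_le.mpr (tP_le h)).trans (by push_cast; linarith)
      _ = C * 4 ^ ε * x ^ ε := by rw [Real.mul_rpow (by norm_num) (by linarith), mul_assoc]
  · rintro p hp n hn ⟨hd, hnt⟩
    have h := frobDisc_ne_zero hHasse (Nat.prime_of_mem_primesLE hp) hd
    have hyn : y ≤ n := (Nat.le_ceil y).trans (by exact_mod_cast (mem_Icc.mp hn).1)
    exact mem_filter.mpr ⟨mem_Icc.mpr ⟨(squarefree_rP h).ne_zero.bot_lt,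
      rP_le_floor_of_dvd_tP h hnt (by linarith) hyn (cast_le_of_mem_primesLE_floor hp)⟩,
      squarefree_rP h⟩
  · rintro m -
    refine card_le_card fun p hp => ?_
    obtain ⟨hpP, ⟨n, -, hd, -⟩, rfl⟩ := mem_filter.mp hp
    exact mem_filter.mpr
      ⟨hpP, isSquare_rP_mul (frobDisc_ne_zero hHasse (Nat.prime_of_mem_primesLE hpP) hd)⟩

/-- Assuming the Hasse bound, for every `ε > 0` there is `C > 0` such that for all `x ≥ 2` and
`1 ≤ y ≤ 2√x`, `D(x, y) ≤ C x^ε ∑_{1 ≤ m ≤ 4x/y², m squarefree} S_m(x)`. -/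
theorem DCount_le_sum_SCount (W : WeierstrassCurve ℤ) (hΔ : W.Δ ≠ 0) (hHasse : HasseBound W) :
    ∀ ε : ℝ, 0 < ε → ∃ C : ℝ, 0 < C ∧ ∀ x y : ℝ, 2 ≤ x → 1 ≤ y → y ≤ 2 * Real.sqrt x →
      ((DCount W x y : ℕ) : ℝ) ≤
        C * x ^ ε *
          ((∑ m ∈ (Finset.Icc 1 ⌊4 * x / y ^ 2⌋₊).filter Squarefree, SCount W m x : ℕ) : ℝ) :=
  DCount_le_sum_SCount_general W hHasse
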